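/- Let γ : S¹ → ℝᵈ be a simple closed curve whose i-th coordinate shadow is a simple path λᵢ : [0,1] → {xᵢ = 0}. Then γ splits into two closed arcs Tᵢ and Bᵢ with Tᵢ ∩ Bᵢ = {aᵢ, ãᵢ}, πᵢ(Tᵢ) = πᵢ(Bᵢ) = πᵢ(γ), where πᵢ(aᵢ) and πᵢ(ãᵢ) are the two endpoints of the path. -/

import Mathlib

/-!
Lifting the shadow `πᵢ ∘ γ` through the embedding `lam` gives a continuous surjection
`g : S¹ → [0, 1]`. Cut the circle at a point of `g⁻¹ 0` and a point of `g⁻¹ 1`: each of the two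
closed arcs is connected and contains both points, so by the intermediate value theorem `g` maps
it onto `[0, 1]`, i.e. it projects onto the whole shadow.
-/

open Real unitInterval

/-- Orthogonal projection of `ℝᵈ` onto the coordinate hyperplane `{x : xᵢ = 0}`. -/
noncomputable def coordProj {d : ℕ} (i : Fin d) (x : EuclideanSpace ℝ (Fin d)) :
    EuclideanSpace ℝ (Fin d) :=
  WithLp.toLp 2 (Function.update (WithLp.ofLp x) i 0)

open Set Function Topology

lemma continuous_coordProj {d : ℕ} (i : Fin d) : Continuous (coordProj i) :=
  (PiLp.continuous_toLp 2 _).comp ((PiLp.continuous_ofLp 2 _).update i continuous_const)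

namespace Circle

lemma exists_exp_eq_exp_eq {x y : Circle} (h : x ≠ y) :
    ∃ α β : ℝ, α < β ∧ β < α + 2 * π ∧ exp α = x ∧ exp β = y :=
  ⟨(x : ℂ).arg, (x : ℂ).arg + angleDiff x y, by simpa using angleDiff_pos h,
    by simpa using angleDiff_lt_two_pi x y, exp_arg x,
    by rw [exp_add, exp_arg, mul_comm, exp_angleDiff_mul]⟩

lemma exp_image_Icc_union_exp_image_Icc {α β : ℝ} (h₁ : α ≤ β) (h₂ : β ≤ α + 2 * π) :
    exp '' Icc α β ∪ exp '' Icc β (α + 2 * π) = univ := by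
  rw [← image_union, Icc_union_Icc_eq_Icc h₁ h₂, periodic_exp.image_Icc two_pi_pos,
    exp_surjective.range_eq]

lemma exp_image_Icc_inter_exp_image_Icc {α β : ℝ} (h₁ : α < β) (h₂ : β < α + 2 * π) :
    exp '' Icc α β ∩ exp '' Icc β (α + 2 * π) = {exp α, exp β} := by
  have hinj : InjOn exp (Ico α (α + 2 * π)) := exp_injOn_Ico (by simp)
  have hmeet : Icc α β ∩ Ico β (α + 2 * π) = {β} := by
    ext t
    simp only [mem_inter_iff, mem_Icc, mem_Ico, mem_singleton_iff]
    constructor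
    · rintro ⟨⟨-, h⟩, h', -⟩; exact le_antisymm h h'
    · rintro rfl; exact ⟨⟨h₁.le, le_rfl⟩, le_rfl, h₂⟩
  rw [← Ico_union_right h₂.le, image_union, image_singleton, exp_add_two_pi,
    inter_union_distrib_left, ← hinj.image_inter (Icc_subset_Ico_right h₂)
      (Ico_subset_Ico_left h₁.le), hmeet, image_singleton,
    inter_singleton_of_mem (mem_image_of_mem exp (left_mem_Icc.2 h₁.le)),
    singleton_union, pair_comm]

end Circle

lemma unitInterval.eq_univ_of_isPreconnected {s : Set I} (hs : IsPreconnected s)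
    (h₀ : 0 ∈ s) (h₁ : 1 ∈ s) : s = univ :=
  eq_univ_of_forall fun t => hs.Icc_subset h₀ h₁ ⟨t.2.1, t.2.2⟩

lemma Topology.IsEmbedding.exists_continuous_surjective_comp_eq {X Y Z : Type*}
    [TopologicalSpace X] [TopologicalSpace Y] [TopologicalSpace Z] {e : Y → Z}
    (he : IsEmbedding e) {p : X → Z} (hp : Continuous p) (h : range p = range e) :
    ∃ g : X → Y, Continuous g ∧ Surjective g ∧ e ∘ g = p := by
  choose g hg using fun x => (h ▸ mem_range_self x : p x ∈ range e)
  have hcomp : e ∘ g = p := funext hg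
  refine ⟨g, he.continuous_iff.2 (hcomp ▸ hp), ?_, hcomp⟩
  rw [← range_eq_univ, ← he.injective.image_injective.eq_iff, image_univ, ← range_comp,
    hcomp, h]

/-- If the `i`-th coordinate shadow of a simple closed curve `γ` in `ℝᵈ` is a simple
path `lam`, then the curve splits into two closed arcs `T` and `B` meeting exactly in
two points `a` and `a'`, each arc projecting onto the whole shadow, with `πᵢ a` and
`πᵢ a'` the two endpoints of the path. -/
theorem curve_splits_into_top_and_bottom (d : ℕ) (i : Fin d)
    (γ : Circle → EuclideanSpace ℝ (Fin d)) (hγ : Topology.IsEmbedding γ)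
    (lam : I → EuclideanSpace ℝ (Fin d)) (hlam : Topology.IsEmbedding lam)
    (hrange : Set.range lam = coordProj i '' Set.range γ) :
    ∃ (α β : ℝ) (T B : Set (EuclideanSpace ℝ (Fin d))) (a a' : EuclideanSpace ℝ (Fin d)),
      α < β ∧ β < α + 2 * π ∧
      T = γ '' (Circle.exp '' Set.Icc α β) ∧
      B = γ '' (Circle.exp '' Set.Icc β (α + 2 * π)) ∧
      T ∪ B = Set.range γ ∧
      a ≠ a' ∧ T ∩ B = {a, a'} ∧
      coordProj i '' T = coordProj i '' Set.range γ ∧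
      coordProj i '' B = coordProj i '' Set.range γ ∧
      ({coordProj i a, coordProj i a'} : Set (EuclideanSpace ℝ (Fin d)))
        = {lam 0, lam 1} := by
  obtain ⟨g, hg, hg_surj, hlam_g⟩ := hlam.exists_continuous_surjective_comp_eq
    ((continuous_coordProj i).comp hγ.continuous) (by rw [range_comp, hrange])
  obtain ⟨c₀, hc₀⟩ := hg_surj 0
  obtain ⟨c₁, hc₁⟩ := hg_surj 1
  have hc : c₀ ≠ c₁ := by rintro rfl; exact zero_ne_one (hc₀.symm.trans hc₁)
  obtain ⟨α, β, hαβ, hβα, rfl, rfl⟩ := Circle.exists_exp_eq_exp_eq hc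
  have hproj (c : Circle) : coordProj i (γ c) = lam (g c) := (congrFun hlam_g c).symm
  have hshadow {s t : ℝ} (hst : s ≤ t) (h₀ : 0 ∈ g '' {Circle.exp s, Circle.exp t})
      (h₁ : 1 ∈ g '' {Circle.exp s, Circle.exp t}) :
      coordProj i '' (γ '' (Circle.exp '' Icc s t)) = coordProj i '' range γ := by
    have hends : {Circle.exp s, Circle.exp t} ⊆ Circle.exp '' Icc s t := by
      rw [← image_pair]
      exact image_mono (pair_subset_iff.2 ⟨left_mem_Icc.2 hst, right_mem_Icc.2 hst⟩)
    have hcover := unitInterval.eq_univ_of_isPreconnected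
      ((isPreconnected_Icc.image _ Circle.exp.continuous.continuousOn).image _ hg.continuousOn)
      (image_mono hends h₀) (image_mono hends h₁)
    rw [← hrange, image_image, funext hproj, ← image_image lam g, hcover, image_univ]
  refine ⟨α, β, _, _, γ (Circle.exp α), γ (Circle.exp β), hαβ, hβα, rfl, rfl, ?_,
    hγ.injective.ne hc, ?_, hshadow hαβ.le ?_ ?_, hshadow hβα.le ?_ ?_, ?_⟩
  · rw [← image_union, Circle.exp_image_Icc_union_exp_image_Icc hαβ.le hβα.le, image_univ]
  · rw [← image_inter hγ.injective, Circle.exp_image_Icc_inter_exp_image_Icc hαβ hβα,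
      image_pair]
  · exact ⟨_, by simp, hc₀⟩
  · exact ⟨_, by simp, hc₁⟩
  · exact ⟨_, by simp, hc₀⟩
  · exact ⟨_, by simp, hc₁⟩
  · rw [hproj, hproj, hc₀, hc₁]
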